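/- arXiv:math/0606525 — 3 statements merged into one kernel-verified Lean document; each statement's English description precedes it below -/
import Mathlib

section
/- Let m ≥ 1 and M ∈ ℕ, let c₀, …, c_m : ℂ → ℂ be polynomial functions of ε with c_m(ε) = ε^M · a_m for a nonzero constant a_m ∈ ℂ, and for ε > 0 set P_ε(X) = Σ_{j=0}^m c_j(ε) X^j, a polynomial of degree m in X. Then: (i) there exist ε₀ > 0 and continuous functions ξ₁, …, ξ_m : (0, ε₀) → ℂ such that for every ε ∈ (0, ε₀) one has the factorization P_ε(X) = ε^M a_m ∏_{i=1}^m (X − ξ_i(ε)); (ii) there exists p ∈ ℕ, p ≥ 1, such that for each i = 1, …, m the function ε ↦ ξ_i(ε^p), defined for small ε > 0, extends to a function that is meromorphic at 0, i.e. holomorphic on a punctured disc around 0 in ℂ with at worst a pole at 0. -/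
/-!
Multiplying `P_ε` by `ε^{M(m-1)} / a_m` and substituting `X = Y / ε^M` turns it into a monic
polynomial `Y^m + Σ b_j(ε) Y^j` with coefficients analytic at `0`, so it suffices to prove the
Newton–Puiseux theorem for monic analytic families: after `t = z^p` the roots are analytic in `z`.
This goes by induction on the degree. A Tschirnhaus shift `Y ↦ Y - σ(t)` kills the coefficient of
`Y^{m-1}`. If all coefficients then vanish, every root is `-σ`. Otherwise the Newton polygon gives
`t = s^B`, `Y = s^A Y'` after which the family `D_s(Y')` is still analytic and `D_0` has a zero
coefficient of `Y'^{m-1}` but is not `Y'^m`, hence is not a pure power `(Y' - a)^m` and splits into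
coprime monic factors of smaller degree. The inverse function theorem for the coefficient map of
multiplication, whose derivative is the Sylvester map and thus invertible by coprimality, lifts this
splitting to an analytic factorization `D_s = U_s V_s` near `s = 0`, to which induction applies.
Finally `ξ_i(ε) = η_i(ε^{1/p}) / ε^M`, so `ξ_i(ε^p) = η_i(ε) / ε^{pM}` with `η_i` analytic.
-/

/-- A function `F : ℂ → ℂ` is meromorphic at `0` if it is holomorphic on some punctured disc
`{0 < |z| < ρ}` and `z^k F(z)` extends holomorphically across `0` for some `k ∈ ℕ`. -/
def MeromorphicAtZero (F : ℂ → ℂ) : Prop :=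
  ∃ ρ > (0 : ℝ), (∀ z : ℂ, z ≠ 0 → ‖z‖ < ρ → DifferentiableAt ℂ F z) ∧
    ∃ k : ℕ, ∃ G : ℂ → ℂ, (∀ z : ℂ, ‖z‖ < ρ → DifferentiableAt ℂ G z) ∧
      ∀ z : ℂ, z ≠ 0 → ‖z‖ < ρ → G z = z ^ k * F z

open Polynomial Filter Topology

namespace Polynomial

variable {R : Type*} [CommRing R]

theorem scaleRoots_prod_X_sub_C {ι : Type*} [NoZeroDivisors R] (s : Finset ι) (r : ι → R)
    (a : R) :
    scaleRoots (∏ i ∈ s, (X - C (r i))) a = ∏ i ∈ s, (X - C (a * r i)) := by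
  classical
  induction s using Finset.induction_on with
  | empty => simp [one_scaleRoots]
  | insert i s hi ih =>
    rw [Finset.prod_insert hi, Finset.prod_insert hi, mul_scaleRoots_of_noZeroDivisors, ih,
      X_sub_C_scaleRoots, mul_comm (r i)]

theorem taylor_prod_X_sub_C {ι : Type*} (s : Finset ι) (r : ι → R) (a : R) :
    taylor a (∏ i ∈ s, (X - C (r i))) = ∏ i ∈ s, (X - C (r i - a)) := by
  rw [taylor_apply, prod_comp]
  refine Finset.prod_congr rfl fun i _ => ?_
  rw [sub_comp, X_comp, C_comp, C_sub]
  ring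

theorem Monic.coeff_taylor_natDegree_sub_one {P : R[X]} (hP : P.Monic) (hn : P.natDegree ≠ 0)
    (r : R) :
    (taylor r P).coeff (P.natDegree - 1) = P.coeff (P.natDegree - 1) + P.natDegree * r := by
  obtain ⟨k, hk⟩ : ∃ k, P.natDegree = k + 1 := Nat.exists_eq_succ_of_ne_zero hn
  have hdeg : (hasseDeriv k P).natDegree < 2 := (natDegree_hasseDeriv_le _ _).trans_lt (by omega)
  rw [hk, Nat.add_sub_cancel, taylor_coeff, eval_eq_sum_range' hdeg]
  simp [Finset.sum_range_succ, hasseDeriv_coeff, add_comm 1 k, ← hk, hP.coeff_natDegree]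
  simp [hk]

theorem Monic.exists_isCoprime_mul_eq {K : Type*} [Field K] [IsAlgClosed K] {q : K[X]}
    (hq : q.Monic) (hq' : ∀ a, q ≠ (X - C a) ^ q.natDegree) :
    ∃ A B : K[X], A.Monic ∧ B.Monic ∧ 0 < A.natDegree ∧ 0 < B.natDegree ∧
      IsCoprime A B ∧ A * B = q := by
  have hdeg : q.degree ≠ 0 := fun h => by
    have h0 : q.natDegree = 0 := natDegree_eq_of_degree_eq_some h
    exact hq' 0 (by simpa [h0] using hq.natDegree_eq_zero.mp h0)
  obtain ⟨a, ha⟩ := IsAlgClosed.exists_root q hdeg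
  obtain ⟨B, hqB, hB⟩ := exists_eq_pow_rootMultiplicity_mul_and_not_dvd q hq.ne_zero a
  have hA : ((X - C a) ^ rootMultiplicity a q).Monic := (monic_X_sub_C a).pow _
  have hBm : B.Monic := hA.of_mul_monic_left (hqB ▸ hq)
  refine ⟨_, B, hA, hBm, ?_, ?_, ?_, hqB.symm⟩
  · rw [(monic_X_sub_C a).natDegree_pow, natDegree_X_sub_C, mul_one]
    exact (rootMultiplicity_pos hq.ne_zero).mpr ha
  · refine Nat.pos_of_ne_zero fun h => hq' a ?_
    rw [hqB, hBm.natDegree_eq_zero.mp h, mul_one, (monic_X_sub_C a).natDegree_pow,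
      natDegree_X_sub_C, mul_one]
  · exact ((irreducible_X_sub_C a).coprime_iff_not_dvd.mpr hB).pow_left

section MonicOfFn

variable [DecidableEq R]

noncomputable def monicOfFn (n : ℕ) (v : Fin n → R) : R[X] := X ^ n + ofFn n v

theorem coeff_monicOfFn_of_lt {n k : ℕ} (v : Fin n → R) (hk : k < n) :
    (monicOfFn n v).coeff k = v ⟨k, hk⟩ := by
  simp [monicOfFn, coeff_X_pow, hk.ne, hk]

theorem monic_monicOfFn [Nontrivial R] (n : ℕ) (v : Fin n → R) : (monicOfFn n v).Monic :=
  monic_X_pow_add (ofFn_degree_lt v)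

theorem natDegree_monicOfFn [Nontrivial R] (n : ℕ) (v : Fin n → R) :
    (monicOfFn n v).natDegree = n := by
  rw [monicOfFn, natDegree_add_eq_left_of_degree_lt] <;> simp [ofFn_degree_lt]

theorem toFn_monicOfFn (n : ℕ) (v : Fin n → R) : toFn n (monicOfFn n v) = v := by
  ext k
  simp [toFn, coeff_monicOfFn_of_lt]

theorem Monic.eq_monicOfFn {p : R[X]} (hp : p.Monic) {n : ℕ} (hn : p.natDegree = n) :
    p = monicOfFn n (toFn n p) := by
  ext k
  rcases lt_trichotomy k n with h | rfl | h
  · simp [coeff_monicOfFn_of_lt _ h, toFn]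
  · simp [monicOfFn, ← hn, hp.coeff_natDegree]
  · rw [coeff_eq_zero_of_natDegree_lt (hn ▸ h)]
    simp [monicOfFn, coeff_X_pow, h.ne', h.le]

theorem eval_monicOfFn (n : ℕ) (v : Fin n → R) (x : R) :
    (monicOfFn n v).eval x = x ^ n + ∑ i : Fin n, v i * x ^ (i : ℕ) := by
  simp [monicOfFn, ofFn_eq_sum_monomial, eval_finsetSum]

theorem scaleRoots_monicOfFn [Nontrivial R] (n : ℕ) (v : Fin n → R) (a : R) :
    scaleRoots (monicOfFn n v) a = monicOfFn n (fun k => a ^ (n - k) * v k) := by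
  ext k
  rw [coeff_scaleRoots, natDegree_monicOfFn]
  rcases lt_trichotomy k n with h | rfl | h
  · rw [coeff_monicOfFn_of_lt _ h, coeff_monicOfFn_of_lt _ h, mul_comm]
  · simp [monicOfFn]
  · simp [monicOfFn, coeff_X_pow, h.ne', h.le]

theorem monicOfFn_ne_X_sub_C_pow [IsDomain R] [CharZero R] {n : ℕ} {v : Fin n → R}
    (hv : v ≠ 0) (hv' : (monicOfFn n v).coeff (n - 1) = 0) (a : R) :
    monicOfFn n v ≠ (X - C a) ^ n := by
  intro h
  have hn : n ≠ 0 := by rintro rfl; exact hv (Subsingleton.elim _ _)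
  have ha : a = 0 := by
    rw [h, sub_eq_add_neg, ← C_neg, coeff_X_add_C_pow, Nat.sub_sub_self (by omega), pow_one,
      Nat.choose_symm (by omega), Nat.choose_one_right] at hv'
    simpa [hn] using hv'
  refine hv (injective_ofFn n ?_)
  simpa [monicOfFn, ha] using h

end MonicOfFn

end Polynomial

theorem tendsto_pow_nhdsNE_zero {𝕜 : Type*} [NontriviallyNormedField 𝕜] {k : ℕ} (hk : k ≠ 0) :
    Tendsto (fun z : 𝕜 => z ^ k) (𝓝[≠] 0) (𝓝[≠] 0) := by
  refine tendsto_nhdsWithin_iff.mpr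
    ⟨?_, eventually_nhdsWithin_of_forall fun z hz => pow_ne_zero k hz⟩
  simpa [zero_pow hk] using ((continuous_pow k).tendsto (0 : 𝕜)).mono_left nhdsWithin_le_nhds

section AnalyticOrder

variable {𝕜 : Type*} [NontriviallyNormedField 𝕜]

theorem AnalyticAt.comp_pow {E : Type*} [NormedAddCommGroup E] [NormedSpace 𝕜 E] {g : 𝕜 → E}
    (hg : AnalyticAt 𝕜 g 0) {k : ℕ} (hk : k ≠ 0) : AnalyticAt 𝕜 (fun z => g (z ^ k)) 0 :=
  hg.comp_of_eq (analyticAt_id.pow k) (zero_pow hk)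

theorem AnalyticAt.exists_eq_pow_mul_of_le_analyticOrderAt {f : 𝕜 → 𝕜} (hf : AnalyticAt 𝕜 f 0)
    {n : ℕ} (hn : n ≤ analyticOrderAt f 0) :
    ∃ g : 𝕜 → 𝕜, AnalyticAt 𝕜 g 0 ∧ analyticOrderAt f 0 = n + analyticOrderAt g 0 ∧
      ∀ᶠ z in 𝓝 0, f z = z ^ n * g z := by
  obtain ⟨g, hg, hfg⟩ := (natCast_le_analyticOrderAt hf).mp hn
  simp only [sub_zero, smul_eq_mul] at hfg
  refine ⟨g, hg, ?_, hfg⟩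
  rw [analyticOrderAt_congr hfg, ← analyticOrderAt_centeredMonomial (z₀ := (0 : 𝕜)) (n := n),
    ← analyticOrderAt_mul (by fun_prop) hg]
  simp [Pi.mul_def]

theorem AnalyticAt.analyticOrderAt_comp_pow {f : 𝕜 → 𝕜} (hf : AnalyticAt 𝕜 f 0) {B : ℕ}
    (hB : B ≠ 0) :
    analyticOrderAt (fun z => f (z ^ B)) 0 = analyticOrderAt f 0 * B := by
  have hf' : AnalyticAt 𝕜 f ((fun z : 𝕜 => z ^ B) 0) := by simpa [zero_pow hB] using hf
  have := hf'.analyticOrderAt_comp (g := fun z : 𝕜 => z ^ B) (by fun_prop)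
  simp only [zero_pow hB, sub_zero] at this
  rw [← Function.comp_def, this]
  congr 1
  simpa [Pi.pow_def] using analyticOrderAt_centeredMonomial (z₀ := (0 : 𝕜)) (n := B)

theorem exists_forall_mul_le_mul {ι : Type*} [Fintype ι] (ν : ι → ℕ∞) (w : ι → ℕ)
    (hw : ∀ i, 0 < w i) (hν : ∃ i, ν i ≠ ⊤) :
    ∃ j, ν j ≠ ⊤ ∧ ∀ i, ν j * w i ≤ ν i * w j := by
  classical
  obtain ⟨j, hj, hmin⟩ := Finset.exists_min_image (Finset.univ.filter (ν · ≠ ⊤))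
    (fun i => ((ν i).toNat : ℚ) / w i) (by simpa [Finset.Nonempty] using hν)
  simp only [Finset.mem_filter, Finset.mem_univ, true_and] at hj hmin
  refine ⟨j, hj, fun i => ?_⟩
  by_cases hi : ν i = ⊤
  · simp [hi, ENat.top_mul (Nat.cast_ne_zero.mpr (hw j).ne')]
  have h := hmin i hi
  rw [div_le_div_iff₀ (by exact_mod_cast hw j) (by exact_mod_cast hw i)] at h
  rw [← ENat.natCast_toNat hj, ← ENat.natCast_toNat hi]
  exact_mod_cast h

theorem exists_newton_rescaling {m : ℕ} {c : 𝕜 → Fin m → 𝕜} (hc : AnalyticAt 𝕜 c 0)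
    (hc0 : ¬∀ᶠ t in 𝓝 0, c t = 0) :
    ∃ A B : ℕ, B ≠ 0 ∧ ∃ d : 𝕜 → Fin m → 𝕜, AnalyticAt 𝕜 d 0 ∧ d 0 ≠ 0 ∧
      (∀ k, (∀ᶠ t in 𝓝 0, c t k = 0) → d 0 k = 0) ∧
      ∀ᶠ s in 𝓝 0, ∀ k : Fin m, c (s ^ B) k = s ^ (A * (m - k)) * d s k := by
  have hck k : AnalyticAt 𝕜 (fun t => c t k) 0 := analyticAt_pi_iff.mp hc k
  set ν : Fin m → ℕ∞ := fun k => analyticOrderAt (fun t => c t k) 0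
  have hν : ∃ k, ν k ≠ ⊤ := by
    by_contra! h
    exact hc0 (by
      simpa [funext_iff] using eventually_all.mpr fun k => analyticOrderAt_eq_top.mp (h k))
  -- `j` realises the smallest slope `ν j / (m - j)` of the Newton polygon, so that
  -- `A (m - k) ≤ B ν k` for all `k`, with equality at `k = j`.
  obtain ⟨j, hj, hslope⟩ := exists_forall_mul_le_mul ν (fun k => m - k) (fun k => by omega) hν
  set A := (ν j).toNat
  have hA : analyticOrderAt (fun t => c t j) 0 = A := (ENat.natCast_toNat hj).symm
  have hB : m - (j : ℕ) ≠ 0 := by omega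
  have hle (k : Fin m) :
      ((A * (m - k) : ℕ) : ℕ∞) ≤ analyticOrderAt (fun s => c (s ^ (m - j)) k) 0 := by
    rw [(hck k).analyticOrderAt_comp_pow hB, Nat.cast_mul, ← hA]
    exact hslope k
  have hcB (k : Fin m) : AnalyticAt 𝕜 (fun s => c (s ^ (m - j)) k) 0 := (hck k).comp_pow hB
  choose g hg hνg hcg using fun k => (hcB k).exists_eq_pow_mul_of_le_analyticOrderAt (hle k)
  refine ⟨A, m - j, hB, fun s k => g k s, analyticAt_pi_iff.mpr hg, fun h0 => ?_, fun k hk => ?_,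
    eventually_all.mpr hcg⟩
  · have h := hνg j
    rw [(hck j).analyticOrderAt_comp_pow hB, hA, ← Nat.cast_mul] at h
    have hgj : analyticOrderAt (g j) 0 = 0 :=
      WithTop.add_left_cancel (ENat.natCast_ne_top _) (h.symm.trans (add_zero _).symm)
    exact (hg j).analyticOrderAt_eq_zero.mp hgj (congrFun h0 j)
  · have h := hνg k
    rw [(hck k).analyticOrderAt_comp_pow hB, analyticOrderAt_eq_top.mpr hk,
      ENat.top_mul (by exact_mod_cast hB)] at h
    refine apply_eq_zero_of_analyticOrderAt_ne_zero ?_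
    rw [(WithTop.add_eq_top.mp h.symm).resolve_left (ENat.natCast_ne_top _)]
    exact ENat.top_ne_zero

end AnalyticOrder

section CoefficientFamilies

theorem analyticAt_coeff_monicOfFn {n : ℕ} {c : ℂ → Fin n → ℂ} (hc : AnalyticAt ℂ c 0)
    (k : ℕ) :
    AnalyticAt ℂ (fun t => (monicOfFn n (c t)).coeff k) 0 := by
  by_cases hk : k < n
  · simpa [coeff_monicOfFn_of_lt _ hk] using analyticAt_pi_iff.mp hc ⟨k, hk⟩
  · simpa [monicOfFn, ofFn_coeff_eq_zero_of_ge _ (not_lt.mp hk)] using analyticAt_const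

theorem analyticAt_toFn {P : ℂ → ℂ[X]} (hP : ∀ k, AnalyticAt ℂ (fun t => (P t).coeff k) 0)
    (n : ℕ) : AnalyticAt ℂ (fun t => toFn n (P t)) 0 :=
  analyticAt_pi_iff.mpr fun k => by simpa [toFn] using hP k

theorem analyticAt_coeff_taylor {P : ℂ → ℂ[X]} {N : ℕ} (hN : ∀ t, (P t).natDegree ≤ N)
    (hP : ∀ k, AnalyticAt ℂ (fun t => (P t).coeff k) 0) {r : ℂ → ℂ} (hr : AnalyticAt ℂ r 0)
    (k : ℕ) : AnalyticAt ℂ (fun t => (taylor (r t) (P t)).coeff k) 0 := by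
  have hdeg t : (hasseDeriv k (P t)).natDegree < N + 1 :=
    Nat.lt_succ_of_le ((natDegree_hasseDeriv_le _ _).trans ((Nat.sub_le _ _).trans (hN t)))
  simp only [taylor_coeff, eval_eq_sum_range' (hdeg _), hasseDeriv_coeff]
  exact Finset.analyticAt_fun_sum _ fun i _ => ((analyticAt_const.mul (hP _)).mul (hr.pow i))

theorem exists_tschirnhaus_shift {m : ℕ} (hm : m ≠ 0) {c : ℂ → Fin m → ℂ}
    (hc : AnalyticAt ℂ c 0) :
    ∃ σ : ℂ → ℂ, AnalyticAt ℂ σ 0 ∧ ∃ c' : ℂ → Fin m → ℂ, AnalyticAt ℂ c' 0 ∧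
      (∀ t, (monicOfFn m (c' t)).coeff (m - 1) = 0) ∧
      ∀ t, monicOfFn m (c t) = taylor (σ t) (monicOfFn m (c' t)) := by
  set P := fun t => monicOfFn m (c t)
  set σ := fun t => (P t).coeff (m - 1) / m
  have hQ t : taylor (-σ t) (P t) = monicOfFn m (toFn m (taylor (-σ t) (P t))) :=
    Monic.eq_monicOfFn (by rw [Monic, leadingCoeff_taylor]; exact monic_monicOfFn m (c t))
      (by simp [natDegree_taylor, P, natDegree_monicOfFn])
  have hσ : AnalyticAt ℂ σ 0 := (analyticAt_coeff_monicOfFn hc _).div_const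
  refine ⟨σ, hσ, fun t => toFn m (taylor (-σ t) (P t)),
    analyticAt_toFn (analyticAt_coeff_taylor (fun t => (natDegree_monicOfFn m (c t)).le)
      (analyticAt_coeff_monicOfFn hc) hσ.neg) m, fun t => ?_, fun t => ?_⟩
  · have h := (monic_monicOfFn m (c t)).coeff_taylor_natDegree_sub_one
      (by rwa [natDegree_monicOfFn]) (-σ t)
    rw [natDegree_monicOfFn] at h
    rw [← hQ, h, mul_neg, ← sub_eq_add_neg, sub_eq_zero]
    exact (mul_div_cancel₀ _ (Nat.cast_ne_zero.mpr hm)).symm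
  · rw [← hQ, taylor_taylor, add_neg_cancel, taylor_zero]

end CoefficientFamilies

theorem HasStrictFDerivAt.analyticAt_localInverse {𝕜 E F : Type*} [NontriviallyNormedField 𝕜]
    [NormedAddCommGroup E] [NormedSpace 𝕜 E] [CompleteSpace E]
    [NormedAddCommGroup F] [NormedSpace 𝕜 F]
    {f : E → F} {f' : E ≃L[𝕜] F} {a : E} (hf : HasStrictFDerivAt f (f' : E →L[𝕜] F) a)
    (ha : AnalyticAt 𝕜 f a) : AnalyticAt 𝕜 (hf.localInverse f f' a) (f a) := by
  obtain ⟨p, hp⟩ := ha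
  have hp1 : p 1 = (continuousMultilinearCurryFin1 𝕜 E F).symm f' := by
    rw [← hp.hasFDerivAt.unique hf.hasFDerivAt, LinearIsometryEquiv.symm_apply_apply]
  rw [← hf.toOpenPartialHomeomorph_coe] at hp
  exact ((hf.toOpenPartialHomeomorph f).hasFPowerSeriesAt_symm
    hf.mem_toOpenPartialHomeomorph_source hp hp1).analyticAt

section Hensel

noncomputable def mulCoeffs (d₁ d₂ : ℕ) (x : (Fin d₁ → ℂ) × (Fin d₂ → ℂ)) :
    Fin (d₁ + d₂) → ℂ :=
  toFn (d₁ + d₂) (monicOfFn d₁ x.1 * monicOfFn d₂ x.2)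

noncomputable def ofFnMul (d₁ d₂ : ℕ) :
    (Fin d₁ → ℂ) →L[ℂ] (Fin d₂ → ℂ) →L[ℂ] (Fin (d₁ + d₂) → ℂ) :=
  LinearMap.toContinuousLinearMap <| LinearMap.toContinuousLinearMap.toLinearMap ∘ₗ
    ((LinearMap.mul ℂ ℂ[X]).compl₁₂ (ofFn d₁) (ofFn d₂)).compr₂ (toFn (d₁ + d₂))

variable {d₁ d₂ : ℕ}

theorem monicOfFn_mulCoeffs (x : (Fin d₁ → ℂ) × (Fin d₂ → ℂ)) :
    monicOfFn (d₁ + d₂) (mulCoeffs d₁ d₂ x) = monicOfFn d₁ x.1 * monicOfFn d₂ x.2 := by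
  have h₁ := monic_monicOfFn d₁ x.1
  have h₂ := monic_monicOfFn d₂ x.2
  refine ((h₁.mul h₂).eq_monicOfFn ?_).symm
  rw [h₁.natDegree_mul h₂, natDegree_monicOfFn, natDegree_monicOfFn]

noncomputable def mulCoeffsDeriv (x₀ : (Fin d₁ → ℂ) × (Fin d₂ → ℂ)) :
    ((Fin d₁ → ℂ) × (Fin d₂ → ℂ)) →ₗ[ℂ] (Fin (d₁ + d₂) → ℂ) where
  toFun a := toFn (d₁ + d₂) (ofFn d₁ a.1 * monicOfFn d₂ x₀.2 + monicOfFn d₁ x₀.1 * ofFn d₂ a.2)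
  map_add' a b := by
    simp only [Prod.fst_add, Prod.snd_add, map_add, add_mul, mul_add]
    abel
  map_smul' r a := by
    simp only [Prod.smul_fst, Prod.smul_snd, map_smul, smul_mul_assoc, mul_smul_comm, ← smul_add]
    rfl

theorem mulCoeffs_eq (x₀ x : (Fin d₁ → ℂ) × (Fin d₂ → ℂ)) :
    mulCoeffs d₁ d₂ x = mulCoeffs d₁ d₂ x₀ + mulCoeffsDeriv x₀ (x - x₀) +
      ofFnMul d₁ d₂ (x - x₀).1 (x - x₀).2 := by
  obtain ⟨a, rfl⟩ : ∃ a, x = x₀ + a := ⟨x - x₀, by abel⟩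
  have key : monicOfFn d₁ (x₀ + a).1 * monicOfFn d₂ (x₀ + a).2 =
      monicOfFn d₁ x₀.1 * monicOfFn d₂ x₀.2 +
        (ofFn d₁ a.1 * monicOfFn d₂ x₀.2 + monicOfFn d₁ x₀.1 * ofFn d₂ a.2) +
        ofFn d₁ a.1 * ofFn d₂ a.2 := by
    simp only [monicOfFn, Prod.fst_add, Prod.snd_add, map_add]
    ring
  rw [mulCoeffs, key, map_add, map_add, add_sub_cancel_left]
  rfl

theorem hasFDerivAt_mulCoeffs (x₀ : (Fin d₁ → ℂ) × (Fin d₂ → ℂ)) :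
    HasFDerivAt (mulCoeffs d₁ d₂) (mulCoeffsDeriv x₀).toContinuousLinearMap x₀ := by
  have hβ : HasFDerivAt (fun y : (Fin d₁ → ℂ) × (Fin d₂ → ℂ) => ofFnMul d₁ d₂ y.1 y.2)
      (0 : (Fin d₁ → ℂ) × (Fin d₂ → ℂ) →L[ℂ] Fin (d₁ + d₂) → ℂ) (x₀ - x₀) := by
    rw [sub_self]
    exact ((ofFnMul d₁ d₂).isBoundedBilinearMap.hasFDerivAt 0).congr_fderiv (by ext <;> simp)
  have hsub := hasFDerivAt_sub_const (𝕜 := ℂ) (x := x₀) x₀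
  rw [show mulCoeffs d₁ d₂ = _ from funext (mulCoeffs_eq x₀)]
  simpa using ((hasFDerivAt_const _ x₀).add
    ((mulCoeffsDeriv x₀).toContinuousLinearMap.hasFDerivAt.comp x₀ hsub)).add
    (hβ.comp (f := fun x => x - x₀) x₀ hsub)

theorem analyticAt_mulCoeffs (x₀ : (Fin d₁ → ℂ) × (Fin d₂ → ℂ)) :
    AnalyticAt ℂ (mulCoeffs d₁ d₂) x₀ := by
  rw [show mulCoeffs d₁ d₂ = _ from funext (mulCoeffs_eq x₀)]
  have hsub : AnalyticAt ℂ (fun x => x - x₀) x₀ := analyticAt_id.sub analyticAt_const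
  exact (analyticAt_const.add (((mulCoeffsDeriv x₀).toContinuousLinearMap.analyticAt _).comp
    hsub)).add (((ofFnMul d₁ d₂).analyticAt_bilinear _).comp hsub)

theorem mulCoeffsDeriv_injective (hd₁ : d₁ ≠ 0) (hd₂ : d₂ ≠ 0)
    {x₀ : (Fin d₁ → ℂ) × (Fin d₂ → ℂ)} (hx₀ : IsCoprime (monicOfFn d₁ x₀.1) (monicOfFn d₂ x₀.2)) :
    Function.Injective (mulCoeffsDeriv x₀) := by
  rw [← LinearMap.ker_eq_bot, LinearMap.ker_eq_bot']
  rintro ⟨a, b⟩ hab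
  set U := monicOfFn d₁ x₀.1
  set V := monicOfFn d₂ x₀.2
  have hA := ofFn_natDegree_lt (Nat.one_le_iff_ne_zero.mpr hd₁) a
  have hB := ofFn_natDegree_lt (Nat.one_le_iff_ne_zero.mpr hd₂) b
  have hS : ofFn d₁ a * V + U * ofFn d₂ b = 0 := by
    have hdeg : (ofFn d₁ a * V + U * ofFn d₂ b).natDegree < d₁ + d₂ := by
      refine (natDegree_add_le _ _).trans_lt (max_lt ?_ ?_) <;>
        refine natDegree_mul_le.trans_lt ?_ <;> simp only [U, V, natDegree_monicOfFn] <;> omega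
    rw [← ofFn_comp_toFn_eq_id_of_natDegree_lt hdeg]
    exact (congrArg (ofFn _) hab).trans (map_zero _)
  have ha : ofFn d₁ a = 0 := by
    by_contra ha
    have hdvd : U ∣ ofFn d₁ a := hx₀.dvd_of_dvd_mul_right ⟨-ofFn d₂ b, by linear_combination hS⟩
    have := natDegree_le_of_dvd hdvd ha
    simp only [U, natDegree_monicOfFn] at this
    omega
  have hb : ofFn d₂ b = 0 := by
    simpa [ha, U, (monic_monicOfFn d₁ x₀.1).ne_zero] using hS
  exact Prod.ext (injective_ofFn _ (ha.trans (map_zero _).symm))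
    (injective_ofFn _ (hb.trans (map_zero _).symm))

theorem exists_analyticAt_factorization (hd₁ : d₁ ≠ 0) (hd₂ : d₂ ≠ 0) {u₀ : Fin d₁ → ℂ}
    {v₀ : Fin d₂ → ℂ} (hcop : IsCoprime (monicOfFn d₁ u₀) (monicOfFn d₂ v₀))
    {c : ℂ → Fin (d₁ + d₂) → ℂ} (hc : AnalyticAt ℂ c 0)
    (hc0 : monicOfFn (d₁ + d₂) (c 0) = monicOfFn d₁ u₀ * monicOfFn d₂ v₀) :
    ∃ u : ℂ → Fin d₁ → ℂ, ∃ v : ℂ → Fin d₂ → ℂ, AnalyticAt ℂ u 0 ∧ AnalyticAt ℂ v 0 ∧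
      ∀ᶠ s in 𝓝 0, monicOfFn (d₁ + d₂) (c s) = monicOfFn d₁ (u s) * monicOfFn d₂ (v s) := by
  set x₀ : (Fin d₁ → ℂ) × (Fin d₂ → ℂ) := (u₀, v₀)
  have hinj := mulCoeffsDeriv_injective hd₁ hd₂ (x₀ := x₀) hcop
  have hsurj : Function.Surjective (mulCoeffsDeriv x₀) :=
    (LinearMap.injective_iff_surjective_of_finrank_eq_finrank (by simp)).mp hinj
  set e := (LinearEquiv.ofBijective _ ⟨hinj, hsurj⟩).toContinuousLinearEquiv
  have hΦ : HasStrictFDerivAt (mulCoeffs d₁ d₂) (e : _ →L[ℂ] _) x₀ := by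
    have h := (analyticAt_mulCoeffs x₀).hasStrictFDerivAt
    rwa [(hasFDerivAt_mulCoeffs x₀).fderiv] at h
  have hc0' : c 0 = mulCoeffs d₁ d₂ x₀ := by
    rw [← toFn_monicOfFn _ (c 0), hc0]
    rfl
  set w := fun s => hΦ.localInverse _ _ _ (c s)
  have hw : AnalyticAt ℂ w 0 :=
    (hc0' ▸ hΦ.analyticAt_localInverse (analyticAt_mulCoeffs x₀)).comp hc
  refine ⟨fun s => (w s).1, fun s => (w s).2, analyticAt_fst.comp hw, analyticAt_snd.comp hw, ?_⟩
  have hcont : Tendsto c (𝓝 0) (𝓝 (mulCoeffs d₁ d₂ x₀)) := hc0' ▸ hc.continuousAt.tendsto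
  filter_upwards [hcont.eventually hΦ.eventually_right_inverse] with s hs
  rw [← hs, monicOfFn_mulCoeffs]

end Hensel

def HasPuiseuxRoots (m : ℕ) (P : ℂ → ℂ[X]) : Prop :=
  ∃ p > 0, ∃ ξ : Fin m → ℂ → ℂ, (∀ i, AnalyticAt ℂ (ξ i) 0) ∧
    ∀ᶠ z in 𝓝[≠] 0, P (z ^ p) = ∏ i, (X - C (ξ i z))

namespace HasPuiseuxRoots

variable {m : ℕ} {P Q : ℂ → ℂ[X]}

theorem X_pow (m : ℕ) : HasPuiseuxRoots m (fun _ => X ^ m) :=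
  ⟨1, one_pos, fun _ _ => 0, fun _ => analyticAt_const, by simp⟩

theorem congr (h : HasPuiseuxRoots m P) (hPQ : ∀ᶠ t in 𝓝 0, P t = Q t) :
    HasPuiseuxRoots m Q := by
  obtain ⟨p, hp, ξ, hξ, hPξ⟩ := h
  refine ⟨p, hp, ξ, hξ, ?_⟩
  filter_upwards [hPξ,
    ((tendsto_pow_nhdsNE_zero hp.ne').mono_right nhdsWithin_le_nhds).eventually hPQ] with z hz hz'
  rw [← hz', hz]

theorem of_comp_pow {B : ℕ} (hB : 0 < B) (h : HasPuiseuxRoots m (fun s => P (s ^ B))) :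
    HasPuiseuxRoots m P := by
  obtain ⟨p, hp, ξ, hξ, hPξ⟩ := h
  exact ⟨p * B, Nat.mul_pos hp hB, ξ, hξ, by simpa only [pow_mul] using hPξ⟩

theorem scaleRoots (h : HasPuiseuxRoots m P) {a : ℂ → ℂ} (ha : AnalyticAt ℂ a 0) :
    HasPuiseuxRoots m (fun t => scaleRoots (P t) (a t)) := by
  obtain ⟨p, hp, ξ, hξ, hPξ⟩ := h
  refine ⟨p, hp, fun i z => a (z ^ p) * ξ i z, fun i => ?_, ?_⟩
  · exact (ha.comp_pow hp.ne').mul (hξ i)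
  · filter_upwards [hPξ] with z hz
    rw [hz, scaleRoots_prod_X_sub_C]

theorem taylor (h : HasPuiseuxRoots m P) {σ : ℂ → ℂ} (hσ : AnalyticAt ℂ σ 0) :
    HasPuiseuxRoots m (fun t => taylor (σ t) (P t)) := by
  obtain ⟨p, hp, ξ, hξ, hPξ⟩ := h
  refine ⟨p, hp, fun i z => ξ i z - σ (z ^ p), fun i => ?_, ?_⟩
  · exact (hξ i).sub (hσ.comp_pow hp.ne')
  · filter_upwards [hPξ] with z hz
    rw [hz, taylor_prod_X_sub_C]

theorem mul {d₁ d₂ : ℕ} (h₁ : HasPuiseuxRoots d₁ P) (h₂ : HasPuiseuxRoots d₂ Q) :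
    HasPuiseuxRoots (d₁ + d₂) (fun t => P t * Q t) := by
  obtain ⟨p₁, hp₁, ξ₁, hξ₁, hPξ⟩ := h₁
  obtain ⟨p₂, hp₂, ξ₂, hξ₂, hQξ⟩ := h₂
  refine ⟨p₁ * p₂, Nat.mul_pos hp₁ hp₂,
    Fin.append (fun i z => ξ₁ i (z ^ p₂)) (fun j z => ξ₂ j (z ^ p₁)), fun i => ?_, ?_⟩
  · refine Fin.addCases (fun i => ?_) (fun j => ?_) i
    · rw [Fin.append_left]
      exact (hξ₁ i).comp_pow hp₂.ne'
    · rw [Fin.append_right]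
      exact (hξ₂ j).comp_pow hp₁.ne'
  · filter_upwards [(tendsto_pow_nhdsNE_zero hp₂.ne').eventually hPξ,
      (tendsto_pow_nhdsNE_zero hp₁.ne').eventually hQξ] with z hzP hzQ
    simp only [Fin.prod_univ_add, Fin.append_left, Fin.append_right]
    rw [← hzP, ← hzQ, ← pow_mul, ← pow_mul, mul_comm p₂ p₁]

theorem exists_real_parametrization (h : HasPuiseuxRoots m P) :
    ∃ ε₀ > (0 : ℝ), ∃ η : Fin m → ℝ → ℂ, (∀ i, ContinuousOn (η i) (Set.Ioo 0 ε₀)) ∧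
      (∀ ε : ℝ, 0 < ε → ε < ε₀ → P ε = ∏ i, (X - C (η i ε))) ∧
      ∃ p > 0, ∀ i, ∃ g : ℂ → ℂ, AnalyticAt ℂ g 0 ∧ ∀ ε : ℝ, 0 < ε → η i (ε ^ p) = g ε := by
  obtain ⟨p, hp, ξ, hξ, hPξ⟩ := h
  obtain ⟨r, hr, hball⟩ := Metric.eventually_nhds_iff.mp ((eventually_nhdsWithin_iff.mp hPξ).and
    (eventually_all.mpr fun i => (hξ i).eventually_analyticAt))
  set root : ℝ → ℝ := fun ε => ε ^ (p : ℝ)⁻¹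
  have hroot {ε : ℝ} (hε : 0 < ε) (hεr : ε < r ^ p) :
      dist (root ε : ℂ) 0 < r ∧ (root ε : ℂ) ≠ 0 ∧ (root ε : ℂ) ^ p = ε := by
    have hpos : 0 < root ε := Real.rpow_pos_of_pos hε _
    refine ⟨?_, by exact_mod_cast hpos.ne',
      by exact_mod_cast Real.rpow_inv_natCast_pow hε.le hp.ne'⟩
    rw [dist_zero_right, Complex.norm_real, Real.norm_of_nonneg hpos.le]
    have := Real.rpow_lt_rpow hε.le hεr (inv_pos.mpr (Nat.cast_pos.mpr hp))
    rwa [Real.pow_rpow_inv_natCast hr.le hp.ne'] at this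
  refine ⟨r ^ p, pow_pos hr p, fun i ε => ξ i (root ε), fun i ε ⟨hε, hεr⟩ => ?_,
    fun ε hε hεr => ?_, p, hp, fun i => ⟨ξ i, hξ i, fun ε hε => ?_⟩⟩
  · refine ContinuousAt.continuousWithinAt ?_
    have hcont : ContinuousAt (fun ε : ℝ => (root ε : ℂ)) ε :=
      Complex.continuous_ofReal.continuousAt.comp (Real.continuousAt_rpow_const _ _ (Or.inl hε.ne'))
    exact ((hball (hroot hε hεr).1).2 i).continuousAt.comp (f := fun ε : ℝ => (root ε : ℂ)) hcont
  · obtain ⟨hdist, hne, hpow⟩ := hroot hε hεr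
    rw [← hpow]
    exact (hball hdist).1 hne
  · simp only [root, Real.pow_rpow_inv_natCast hε.le hp.ne']

end HasPuiseuxRoots

theorem hasPuiseuxRoots_of_ne_X_sub_C_pow {m : ℕ} {d : ℂ → Fin m → ℂ} (hd : AnalyticAt ℂ d 0)
    (hd0 : ∀ a, monicOfFn m (d 0) ≠ (X - C a) ^ m)
    (ih : ∀ n < m, ∀ {c : ℂ → Fin n → ℂ}, AnalyticAt ℂ c 0 →
      HasPuiseuxRoots n (fun t => monicOfFn n (c t))) :
    HasPuiseuxRoots m (fun s => monicOfFn m (d s)) := by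
  obtain ⟨A, B, hA, hB, hA0, hB0, hAB, hABd⟩ :=
    (monic_monicOfFn m (d 0)).exists_isCoprime_mul_eq (by rwa [natDegree_monicOfFn])
  have hm : A.natDegree + B.natDegree = m := by
    rw [← hA.natDegree_mul hB, hABd, natDegree_monicOfFn]
  subst hm
  have hAu := (hA.eq_monicOfFn rfl).symm
  have hBv := (hB.eq_monicOfFn rfl).symm
  obtain ⟨u, v, hu, hv, huv⟩ := exists_analyticAt_factorization hA0.ne' hB0.ne'
    (by rwa [hAu, hBv]) hd (by rw [hAu, hBv, hABd])
  exact ((ih A.natDegree (by omega) hu).mul (ih B.natDegree (by omega) hv)).congr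
    (huv.mono fun s hs => hs.symm)

theorem hasPuiseuxRoots_monicOfFn (m : ℕ) {c : ℂ → Fin m → ℂ} (hc : AnalyticAt ℂ c 0) :
    HasPuiseuxRoots m (fun t => monicOfFn m (c t)) := by
  induction m using Nat.strong_induction_on with
  | _ m ih =>
  rcases eq_or_ne m 0 with rfl | hm
  · simpa [monicOfFn] using HasPuiseuxRoots.X_pow 0
  obtain ⟨σ, hσ, c', hc', hc'1, hcc'⟩ := exists_tschirnhaus_shift hm hc
  simp_rw [hcc']
  refine HasPuiseuxRoots.taylor ?_ hσ
  by_cases hc'0 : ∀ᶠ t in 𝓝 0, c' t = 0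
  · refine (HasPuiseuxRoots.X_pow m).congr ?_
    filter_upwards [hc'0] with t ht
    simp [ht, monicOfFn]
  obtain ⟨A, B, hB, d, hd, hd0, hdk, hcd⟩ := exists_newton_rescaling hc' hc'0
  have hd1 : (monicOfFn m (d 0)).coeff (m - 1) = 0 := by
    have hlt : m - 1 < m := by omega
    rw [coeff_monicOfFn_of_lt _ hlt]
    exact hdk _ (.of_forall fun t => (coeff_monicOfFn_of_lt (c' t) hlt).symm.trans (hc'1 t))
  refine HasPuiseuxRoots.of_comp_pow (Nat.pos_of_ne_zero hB) ?_
  refine ((hasPuiseuxRoots_of_ne_X_sub_C_pow hd (monicOfFn_ne_X_sub_C_pow hd0 hd1) ih).scaleRoots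
    (a := fun s => s ^ A) (analyticAt_id.pow A)).congr ?_
  filter_upwards [hcd] with s hs
  rw [scaleRoots_monicOfFn]
  congr 1
  ext k
  rw [hs, ← pow_mul]

theorem meromorphicAtZero_div_pow {g : ℂ → ℂ} (hg : AnalyticAt ℂ g 0) (k : ℕ) :
    MeromorphicAtZero (fun z => g z / z ^ k) := by
  obtain ⟨ρ, hρ, hball⟩ := Metric.eventually_nhds_iff.mp hg.eventually_analyticAt
  have hgρ (z : ℂ) (hz : ‖z‖ < ρ) : DifferentiableAt ℂ g z :=
    (hball (by rwa [dist_zero_right])).differentiableAt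
  refine ⟨ρ, hρ, fun z hz hzρ => (hgρ z hzρ).div (differentiableAt_pow k) (pow_ne_zero k hz),
    k, g, hgρ, fun z hz _ => ?_⟩
  rw [mul_div_cancel₀ _ (pow_ne_zero k hz)]

theorem sum_eq_mul_prod_of_monicOfFn_eq {m M : ℕ} {c : ℕ → ℂ} {a t : ℂ} (ha : a ≠ 0) (ht : t ≠ 0)
    (hcm : c m = t ^ M * a) {ξ : Fin m → ℂ}
    (hξ : monicOfFn m (fun j => c j * t ^ (M * (m - 1 - j)) / a) = ∏ i, (X - C (ξ i)))
    (x : ℂ) :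
    ∑ j ∈ Finset.range (m + 1), c j * x ^ j = t ^ M * a * ∏ i, (x - ξ i / t ^ M) := by
  set E := t ^ M
  have hE : E ≠ 0 := pow_ne_zero M ht
  have hprod : E ^ m * ∏ i, (x - ξ i / E) = ∏ i, (E * x - ξ i) := by
    rw [← Fin.prod_const m E, ← Finset.prod_mul_distrib]
    refine Finset.prod_congr rfl fun i _ => ?_
    rw [mul_sub, mul_div_cancel₀ _ hE]
  have h := congrArg (eval (E * x)) hξ
  rw [eval_monicOfFn, eval_prod] at h
  simp only [eval_sub, eval_X, eval_C] at h
  refine mul_left_cancel₀ (pow_ne_zero m hE) ?_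
  rw [mul_left_comm, hprod, ← h, Finset.sum_range_succ, hcm, Fin.sum_univ_eq_sum_range
    (fun j => c j * t ^ (M * (m - 1 - j)) / a * (E * x) ^ j), mul_add, mul_add, Finset.mul_sum,
    Finset.mul_sum, add_comm]
  congr 1
  · ring
  refine Finset.sum_congr rfl fun j hj => ?_
  have hEm : E ^ m = E * E ^ (m - 1 - j) * E ^ j := by
    rw [← pow_succ', ← pow_add]
    congr 1
    have := Finset.mem_range.mp hj
    omega
  rw [pow_mul, hEm]
  field_simp
  ring

theorem stmt0_general (m M : ℕ) (c : ℕ → ℂ → ℂ)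
    (hpoly : ∀ j : ℕ, j ≤ m → ∃ P : Polynomial ℂ, ∀ z : ℂ, c j z = P.eval z)
    (am : ℂ) (ham : am ≠ 0) (hlead : ∀ z : ℂ, c m z = z ^ M * am) :
    ∃ ε₀ > (0 : ℝ), ∃ ξ : Fin m → ℝ → ℂ,
      (∀ i : Fin m, ContinuousOn (ξ i) (Set.Ioo 0 ε₀)) ∧
      (∀ ε : ℝ, 0 < ε → ε < ε₀ → ∀ X : ℂ,
        (∑ j ∈ Finset.range (m + 1), c j (ε : ℂ) * X ^ j)
          = (ε : ℂ) ^ M * am * ∏ i : Fin m, (X - ξ i ε)) ∧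
      ∃ p : ℕ, 1 ≤ p ∧ ∀ i : Fin m, ∃ F : ℂ → ℂ, MeromorphicAtZero F ∧
        ∃ ε₁ > (0 : ℝ), ∀ ε : ℝ, 0 < ε → ε < ε₁ → F (ε : ℂ) = ξ i (ε ^ p) := by
  have hb : AnalyticAt ℂ (fun t (j : Fin m) => c j t * t ^ (M * (m - 1 - j)) / am) 0 := by
    refine analyticAt_pi_iff.mpr fun j => ?_
    obtain ⟨P, hP⟩ := hpoly j j.is_lt.le
    simp only [hP, ← coe_aeval_eq_eval]
    exact ((analyticAt_id.aeval_polynomial P).mul (analyticAt_id.pow _)).div_const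
  obtain ⟨ε₀, hε₀, η, hηc, hηP, p, hp, hηg⟩ :=
    (hasPuiseuxRoots_monicOfFn m hb).exists_real_parametrization
  refine ⟨ε₀, hε₀, fun i ε => η i ε / (ε : ℂ) ^ M, fun i => ?_, fun ε hε hεε₀ X => ?_, p, hp,
    fun i => ?_⟩
  · exact (hηc i).div (Complex.continuous_ofReal.pow M).continuousOn
      fun ε hε => pow_ne_zero M (Complex.ofReal_ne_zero.mpr hε.1.ne')
  · exact sum_eq_mul_prod_of_monicOfFn_eq (c := fun j => c j ε) (ξ := fun i => η i ε) ham
      (Complex.ofReal_ne_zero.mpr hε.ne') (hlead ε) (hηP ε hε hεε₀) X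
  · obtain ⟨g, hg, hηg⟩ := hηg i
    refine ⟨fun z => g z / z ^ (p * M), meromorphicAtZero_div_pow hg _, 1, one_pos,
      fun ε hε _ => ?_⟩
    simp only [hηg ε hε, Complex.ofReal_pow, pow_mul]

/-- For a polynomial `P_ε(X) = Σ_{j=0}^m c_j(ε) X^j` whose coefficients are polynomial in `ε`
and whose leading coefficient is `ε^M a_m` with `a_m ≠ 0`: the `m` roots can be written as
continuous functions `ξ₁(ε), …, ξ_m(ε)` for small `ε > 0` (giving the factorization
`P_ε(X) = ε^M a_m ∏ (X - ξ_i(ε))`), and there exists `p ≥ 1` such that each `ε ↦ ξ_i(ε^p)`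
extends to a function meromorphic at `0`. -/
theorem stmt0 (m M : ℕ) (hm : 1 ≤ m) (c : ℕ → ℂ → ℂ)
    (hpoly : ∀ j : ℕ, j ≤ m → ∃ P : Polynomial ℂ, ∀ z : ℂ, c j z = P.eval z)
    (am : ℂ) (ham : am ≠ 0) (hlead : ∀ z : ℂ, c m z = z ^ M * am) :
    ∃ ε₀ > (0 : ℝ), ∃ ξ : Fin m → ℝ → ℂ,
      (∀ i : Fin m, ContinuousOn (ξ i) (Set.Ioo 0 ε₀)) ∧
      (∀ ε : ℝ, 0 < ε → ε < ε₀ → ∀ X : ℂ,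
        (∑ j ∈ Finset.range (m + 1), c j (ε : ℂ) * X ^ j)
          = (ε : ℂ) ^ M * am * ∏ i : Fin m, (X - ξ i ε)) ∧
      ∃ p : ℕ, 1 ≤ p ∧ ∀ i : Fin m, ∃ F : ℂ → ℂ, MeromorphicAtZero F ∧
        ∃ ε₁ > (0 : ℝ), ∀ ε : ℝ, 0 < ε → ε < ε₁ → F (ε : ℂ) = ξ i (ε ^ p) :=
  stmt0_general m M c hpoly am ham hlead
end

section
/- Let m ≥ 1 and M ∈ ℕ, let c₀, …, c_m : ℂ → ℂ be polynomial functions of ε with c_m(ε) = ε^M · a_m for a nonzero constant a_m ∈ ℂ, and for ε > 0 set P_ε(X) = Σ_{j=0}^m c_j(ε) X^j. Let ξ₁, …, ξ_m : (0, ε₀) → ℂ be continuous functions giving the roots of P_ε with multiplicity, such that for some p ∈ ℕ, p ≥ 1, each ε ↦ ξ_i(ε^p) extends meromorphically at 0. Then for every i, exactly one of the following two possibilities occurs: (1) ξ_i(ε) converges to a limit in ℂ as ε → 0⁺; (2) there exists a unique positive rational number p_i such that ε^{p_i} · ξ_i(ε) converges, as ε → 0⁺, to a nonzero limit in ℂ.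 -/
open Filter Topology

/- A meromorphic function F(z) = z^n g(z), g(0) ≠ 0, has a limit at 0 when n ≥ 0, while
z^(-n) F(z) tends to g(0) ≠ 0 when n < 0. Reading the root as ξ(t) = F(t^(1/p)) turns the
exponent -n into the rational -n/p, and a nonzero limit of t^r ξ(t) can occur for at most one
exponent r ≥ 0, the exponent r = 0 being the convergent case. -/

theorem MeromorphicAt.exists_tendsto_or_exists_tendsto_pow_smul {𝕜 E : Type*}
    [NontriviallyNormedField 𝕜] [NormedAddCommGroup E] [NormedSpace 𝕜 E] {f : 𝕜 → E} {x : 𝕜}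
    (hf : MeromorphicAt f x) :
    (∃ L, Tendsto f (𝓝[≠] x) (𝓝 L)) ∨
      ∃ q : ℕ, 0 < q ∧ ∃ L ≠ 0, Tendsto (fun z => (z - x) ^ q • f z) (𝓝[≠] x) (𝓝 L) := by
  rcases le_or_gt 0 (meromorphicOrderAt f x) with hord | hord
  · exact Or.inl (tendsto_nhds_of_meromorphicOrderAt_nonneg hf hord)
  obtain ⟨n, hn⟩ := WithTop.ne_top_iff_exists.mp hord.ne_top
  have hn_neg : n < 0 := by simpa [← hn] using hord
  obtain ⟨g, hg, hgx, hfg⟩ := (meromorphicOrderAt_eq_int_iff hf).mp hn.symm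
  refine Or.inr ⟨(-n).toNat, by omega, g x, hgx,
    hg.continuousAt.continuousWithinAt.tendsto.congr' ?_⟩
  filter_upwards [hfg, self_mem_nhdsWithin] with z hz hzx
  have hcancel : ((-n).toNat : ℤ) + n = 0 := by omega
  rw [hz, smul_smul, ← zpow_natCast, ← zpow_add₀ (sub_ne_zero.mpr hzx), hcancel, zpow_zero,
    one_smul]

theorem MeromorphicAtZero.meromorphicAt {F : ℂ → ℂ} (hF : MeromorphicAtZero F) :
    MeromorphicAt F 0 := by
  obtain ⟨ρ, hρ, -, k, G, hG, hGF⟩ := hF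
  have hG_an : AnalyticAt ℂ G 0 :=
    DifferentiableOn.analyticAt
      (fun z hz => (hG z (mem_ball_zero_iff.mp hz)).differentiableWithinAt)
      (Metric.ball_mem_nhds 0 hρ)
  refine (hG_an.meromorphicAt.div ((MeromorphicAt.id 0).pow k)).congr ?_
  filter_upwards [nhdsWithin_le_nhds (Metric.ball_mem_nhds 0 hρ), self_mem_nhdsWithin]
    with z hz hz0
  rw [Pi.div_apply, hGF z hz0 (mem_ball_zero_iff.mp hz), Pi.pow_apply, id,
    mul_div_cancel_left₀ _ (pow_ne_zero k hz0)]

theorem tendsto_ofReal_nhdsGT_zero :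
    Tendsto (fun t : ℝ => (t : ℂ)) (𝓝[>] 0) (𝓝[≠] 0) :=
  Complex.continuous_ofReal.continuousWithinAt.tendsto_nhdsWithin fun _ ht =>
    Complex.ofReal_ne_zero.mpr (ne_of_gt ht)

theorem tendsto_rpow_nhdsGT_zero {r : ℝ} (hr : 0 < r) :
    Tendsto (fun t : ℝ => t ^ r) (𝓝[>] 0) (𝓝 0) := by
  have h := (Real.continuousAt_rpow_const 0 r (Or.inr hr.le)).tendsto
  rw [Real.zero_rpow hr.ne'] at h
  exact h.mono_left nhdsWithin_le_nhds

theorem tendsto_rpow_inv_natCast_nhdsGT_zero {p : ℕ} (hp : p ≠ 0) :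
    Tendsto (fun t : ℝ => t ^ (p⁻¹ : ℝ)) (𝓝[>] 0) (𝓝[>] 0) :=
  tendsto_nhdsWithin_of_tendsto_nhds_of_eventually_within _
    (tendsto_rpow_nhdsGT_zero (by positivity))
    (by filter_upwards [self_mem_nhdsWithin] with t ht using Real.rpow_pos_of_pos ht _)

theorem exists_tendsto_or_exists_tendsto_rpow_mul {F : ℂ → ℂ} (hF : MeromorphicAt F 0)
    {f : ℝ → ℂ} {p : ℕ} (hp : p ≠ 0) (hFf : ∀ᶠ t : ℝ in 𝓝[>] 0, F t = f (t ^ p)) :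
    (∃ L, Tendsto f (𝓝[>] 0) (𝓝 L)) ∨
      ∃ r : ℚ, 0 < r ∧ ∃ L ≠ 0,
        Tendsto (fun t : ℝ => ((t ^ (r : ℝ) : ℝ) : ℂ) * f t) (𝓝[>] 0) (𝓝 L) := by
  have hroot := tendsto_rpow_inv_natCast_nhdsGT_zero hp
  have hfF : ∀ᶠ t in 𝓝[>] (0 : ℝ), F ((t ^ (p⁻¹ : ℝ) : ℝ) : ℂ) = f t := by
    filter_upwards [hroot.eventually hFf, self_mem_nhdsWithin] with t ht ht0
    rwa [Real.rpow_inv_natCast_pow (le_of_lt ht0) hp] at ht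
  have hroot_ne := tendsto_ofReal_nhdsGT_zero.comp hroot
  rcases hF.exists_tendsto_or_exists_tendsto_pow_smul with ⟨L, hL⟩ | ⟨q, hq, L, hL0, hL⟩
  · exact Or.inl ⟨L, (hL.comp hroot_ne).congr' hfF⟩
  refine Or.inr ⟨q / p, by positivity, L, hL0, (hL.comp hroot_ne).congr' ?_⟩
  filter_upwards [hfF, self_mem_nhdsWithin] with t ht ht0
  have hpow : t ^ ((q / p : ℚ) : ℝ) = (t ^ (p⁻¹ : ℝ)) ^ q := by
    rw [← Real.rpow_natCast, ← Real.rpow_mul (le_of_lt ht0)]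
    push_cast
    ring_nf
  simp only [Function.comp_apply, sub_zero, smul_eq_mul, hpow, Complex.ofReal_pow, ht]

theorem tendsto_rpow_mul_zero_of_lt {f : ℝ → ℂ} {r s : ℝ} (hrs : r < s) {L : ℂ}
    (h : Tendsto (fun t : ℝ => ((t ^ r : ℝ) : ℂ) * f t) (𝓝[>] 0) (𝓝 L)) :
    Tendsto (fun t : ℝ => ((t ^ s : ℝ) : ℂ) * f t) (𝓝[>] 0) (𝓝 0) := by
  have hgap : Tendsto (fun t : ℝ => ((t ^ (s - r) : ℝ) : ℂ)) (𝓝[>] 0) (𝓝 0) := by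
    simpa using (tendsto_rpow_nhdsGT_zero (sub_pos.mpr hrs)).ofReal
  simpa using (hgap.mul h).congr' <| by
    filter_upwards [self_mem_nhdsWithin] with t ht
    rw [← mul_assoc, ← Complex.ofReal_mul, ← Real.rpow_add ht, sub_add_cancel]

theorem eq_of_tendsto_rpow_mul_ne_zero {f : ℝ → ℂ} {r s : ℝ} {L L' : ℂ} (hL : L ≠ 0)
    (hL' : L' ≠ 0) (hr : Tendsto (fun t : ℝ => ((t ^ r : ℝ) : ℂ) * f t) (𝓝[>] 0) (𝓝 L))
    (hs : Tendsto (fun t : ℝ => ((t ^ s : ℝ) : ℂ) * f t) (𝓝[>] 0) (𝓝 L')) : r = s := by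
  rcases lt_trichotomy r s with hrs | hrs | hrs
  · exact absurd (tendsto_nhds_unique hs (tendsto_rpow_mul_zero_of_lt hrs hr)) hL'
  · exact hrs
  · exact absurd (tendsto_nhds_unique hr (tendsto_rpow_mul_zero_of_lt hrs hs)) hL

theorem not_tendsto_rpow_mul_ne_zero_of_tendsto {f : ℝ → ℂ} {r : ℝ} (hr : 0 < r) {L L' : ℂ}
    (hL' : L' ≠ 0) (hf : Tendsto f (𝓝[>] 0) (𝓝 L)) :
    ¬Tendsto (fun t : ℝ => ((t ^ r : ℝ) : ℂ) * f t) (𝓝[>] 0) (𝓝 L') := fun h =>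
  hL' <| tendsto_nhds_unique h <|
    tendsto_rpow_mul_zero_of_lt hr (by simpa only [Real.rpow_zero, Complex.ofReal_one, one_mul])

theorem xor_of_tendsto_or_tendsto_rpow_mul {f : ℝ → ℂ}
    (h : (∃ L, Tendsto f (𝓝[>] 0) (𝓝 L)) ∨
      ∃ r : ℚ, 0 < r ∧ ∃ L ≠ 0,
        Tendsto (fun t : ℝ => ((t ^ (r : ℝ) : ℝ) : ℂ) * f t) (𝓝[>] 0) (𝓝 L)) :
    Xor (∃ L, Tendsto f (𝓝[>] 0) (𝓝 L))
      (∃! r : ℚ, 0 < r ∧ ∃ L ≠ 0,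
        Tendsto (fun t : ℝ => ((t ^ (r : ℝ) : ℝ) : ℂ) * f t) (𝓝[>] 0) (𝓝 L)) := by
  rcases h with ⟨L, hL⟩ | ⟨r, hr, L, hL0, hL⟩
  · refine Or.inl ⟨⟨L, hL⟩, ?_⟩
    rintro ⟨r, ⟨hr, L', hL', h⟩, -⟩
    exact not_tendsto_rpow_mul_ne_zero_of_tendsto (by exact_mod_cast hr) hL' hL h
  refine Or.inr ⟨⟨r, ⟨hr, L, hL0, hL⟩, ?_⟩, ?_⟩
  · rintro s ⟨-, L', hL', hs⟩
    exact_mod_cast eq_of_tendsto_rpow_mul_ne_zero hL' hL0 hs hL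
  · rintro ⟨L', hL'⟩
    exact not_tendsto_rpow_mul_ne_zero_of_tendsto (by exact_mod_cast hr) hL0 hL' hL

theorem stmt1_general (m : ℕ) (ξ : Fin m → ℝ → ℂ)
    (p : ℕ) (hp : 1 ≤ p)
    (hmero : ∀ i : Fin m, ∃ F : ℂ → ℂ, MeromorphicAtZero F ∧
      ∃ ε₁ > (0 : ℝ), ∀ ε : ℝ, 0 < ε → ε < ε₁ → F (ε : ℂ) = ξ i (ε ^ p)) :
    ∀ i : Fin m, Xor'
      (∃ L : ℂ, Tendsto (ξ i) (𝓝[>] (0 : ℝ)) (𝓝 L))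
      (∃! pi : ℚ, 0 < pi ∧ ∃ L : ℂ, L ≠ 0 ∧
        Tendsto (fun ε : ℝ => ((ε ^ (pi : ℝ) : ℝ) : ℂ) * ξ i ε) (𝓝[>] (0 : ℝ)) (𝓝 L)) := by
  intro i
  obtain ⟨F, hF, ε₁, hε₁, hFξ⟩ := hmero i
  have hFξ' : ∀ᶠ t : ℝ in 𝓝[>] 0, F t = ξ i (t ^ p) := by
    filter_upwards [Ioo_mem_nhdsGT hε₁] with t ht using hFξ t ht.1 ht.2
  exact xor_of_tendsto_or_tendsto_rpow_mul <|
    exists_tendsto_or_exists_tendsto_rpow_mul hF.meromorphicAt (by omega) hFξ'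

/-- Dichotomy for the roots of a singularly perturbed polynomial
`P_ε(X) = Σ_{j=0}^m c_j(ε) X^j` with leading coefficient `ε^M a_m`, `a_m ≠ 0`: if the roots
`ξ₁(ε), …, ξ_m(ε)` are continuous and `ε ↦ ξ_i(ε^p)` extends meromorphically at `0` for some
`p ≥ 1`, then for each `i` exactly one of the following holds: (1) `ξ_i(ε)` has a limit as
`ε → 0⁺`; (2) there is a unique positive rational `p_i` such that `ε^{p_i} ξ_i(ε)` has a
nonzero limit as `ε → 0⁺`. -/
theorem stmt1 (m M : ℕ) (hm : 1 ≤ m) (c : ℕ → ℂ → ℂ)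
    (hpoly : ∀ j : ℕ, j ≤ m → ∃ P : Polynomial ℂ, ∀ z : ℂ, c j z = P.eval z)
    (am : ℂ) (ham : am ≠ 0) (hlead : ∀ z : ℂ, c m z = z ^ M * am)
    (ε₀ : ℝ) (hε₀ : 0 < ε₀) (ξ : Fin m → ℝ → ℂ)
    (hcont : ∀ i : Fin m, ContinuousOn (ξ i) (Set.Ioo 0 ε₀))
    (hfact : ∀ ε : ℝ, 0 < ε → ε < ε₀ → ∀ X : ℂ,
      (∑ j ∈ Finset.range (m + 1), c j (ε : ℂ) * X ^ j)
        = (ε : ℂ) ^ M * am * ∏ i : Fin m, (X - ξ i ε))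
    (p : ℕ) (hp : 1 ≤ p)
    (hmero : ∀ i : Fin m, ∃ F : ℂ → ℂ, MeromorphicAtZero F ∧
      ∃ ε₁ > (0 : ℝ), ∀ ε : ℝ, 0 < ε → ε < ε₁ → F (ε : ℂ) = ξ i (ε ^ p)) :
    ∀ i : Fin m, Xor'
      (∃ L : ℂ, Tendsto (ξ i) (𝓝[>] (0 : ℝ)) (𝓝 L))
      (∃! pi : ℚ, 0 < pi ∧ ∃ L : ℂ, L ≠ 0 ∧
        Tendsto (fun ε : ℝ => ((ε ^ (pi : ℝ) : ℝ) : ℂ) * ξ i ε) (𝓝[>] (0 : ℝ)) (𝓝 L)) :=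
  stmt1_general m ξ p hp hmero
end

section
/- Let A, c ∈ ℂ with A ≠ 0 and c ≠ 0, and let q₀, q₁, q₂, q₃ ∈ ℂ. For ε > 0 consider the quartic polynomial P_ε(X) = A X⁴ + q₃ X³ + q₂ X² + q₁ X + q₀ + c ε^{−1}. Then there exist ε₀ > 0 and functions X₀, X₁, X₂, X₃ : (0, ε₀) → ℂ enumerating the four roots of P_ε counted with multiplicity such that, if ω₀, ω₁, ω₂, ω₃ denote the four complex fourth roots of −c/A, then ε^{1/4} X_l(ε) → ω_l as ε → 0⁺ for l = 0, 1, 2, 3. In particular all four roots blow up at the same rate ε^{−1/4}. -/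
/-!
Put `t = ε^{1/4}` and `w = t z`. Multiplying `P_ε(z)` by `t⁴ = ε` gives
`A w⁴ + c + t (q₃ w³ + t q₂ w² + t² q₁ w + t³ q₀)`, a quartic in `w` depending continuously on `t`
and equal to `A w⁴ + c` at `t = 0`. Evaluating it at a fourth root `ω_l` of `-c/A` shows that
`∏ᵢ (ω_l - t Xᵢ)` tends to `0`, so some rescaled root `t Xᵢ` approaches `ω_l`. As the four `ω_l`
are distinct, for small `ε` they are approached by different roots, which fixes the enumeration.
-/

open Filter Topology Function

open Polynomial in
theorem Polynomial.exists_eq_C_leadingCoeff_mul_prod_fin {K : Type*} [Field K] [IsAlgClosed K]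
    (p : K[X]) {n : ℕ} (hn : p.natDegree = n) :
    ∃ x : Fin n → K, p = C p.leadingCoeff * ∏ i, (X - C (x i)) := by
  set L := p.roots.toList
  have hL : L.length = n := by simp [L, IsAlgClosed.card_roots_eq_natDegree, hn]
  subst hL
  refine ⟨fun i => L[i.1], ?_⟩
  rw [Fin.prod_univ_fun_getElem L (fun a => X - C a), ← Multiset.prod_coe, ← Multiset.map_coe,
    Multiset.coe_toList]
  exact (C_leadingCoeff_mul_prod_multiset_X_sub_C IsAlgClosed.card_roots_eq_natDegree).symm

open Polynomial in
theorem exists_quartic_eq_mul_prod {K : Type*} [Field K] [IsAlgClosed K] {a : K} (ha : a ≠ 0)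
    (b₃ b₂ b₁ b₀ : K) :
    ∃ x : Fin 4 → K, ∀ z,
      a * z ^ 4 + b₃ * z ^ 3 + b₂ * z ^ 2 + b₁ * z + b₀ = a * ∏ i, (z - x i) := by
  set p : K[X] := C a * X ^ 4 + C b₃ * X ^ 3 + C b₂ * X ^ 2 + C b₁ * X + C b₀
  have hdeg : p.natDegree = 4 := by simp only [p]; compute_degree!
  have hlead : p.leadingCoeff = a := by
    rw [leadingCoeff, hdeg]; simp [p]
  obtain ⟨x, hx⟩ := p.exists_eq_C_leadingCoeff_mul_prod_fin hdeg
  refine ⟨x, fun z => ?_⟩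
  simpa [p, hlead, eval_prod] using congrArg (Polynomial.eval z) hx

theorem Complex.exists_injective_pow_eq {n : ℕ} (hn : n ≠ 0) {a : ℂ} (ha : a ≠ 0) :
    ∃ ω : Fin n → ℂ, Injective ω ∧ ∀ l, ω l ^ n = a := by
  obtain ⟨α, rfl⟩ := IsAlgClosed.exists_pow_nat_eq a (Nat.pos_of_ne_zero hn)
  have hα : α ≠ 0 := by rintro rfl; exact ha (zero_pow hn)
  have hζ := Complex.isPrimitiveRoot_exp n hn
  refine ⟨fun l => α * Complex.exp (2 * Real.pi * Complex.I / n) ^ (l : ℕ),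
    fun j k hjk => Fin.ext (hζ.pow_inj j.2 k.2 (mul_left_cancel₀ hα hjk)), fun l => ?_⟩
  rw [mul_pow, ← pow_mul, mul_comm (l : ℕ), pow_mul, hζ.pow_eq_one, one_pow, mul_one]

theorem Function.Injective.exists_pos_eq_of_dist_lt {ι E : Type*} [Finite ι] [MetricSpace E]
    {ω : ι → E} (hω : Injective ω) :
    ∃ r > 0, ∀ x j k, dist (ω j) x < r → dist (ω k) x < r → j = k := by
  have hdouble : Tendsto (fun r : ℝ => 2 * r) (𝓝 0) (𝓝 0) := by
    simpa using (continuous_const_mul (2 : ℝ)).tendsto 0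
  have hsmall : ∀ᶠ r in 𝓝 (0 : ℝ), ∀ j k, j ≠ k → 2 * r < dist (ω j) (ω k) :=
    eventually_all.2 fun j => eventually_all.2 fun k => eventually_imp_distrib_left.2 fun hjk =>
      hdouble.eventually (eventually_lt_nhds (dist_pos.2 (hω.ne hjk)))
  obtain ⟨r, hr, hr0⟩ := ((hsmall.filter_mono nhdsWithin_le_nhds).and
    (self_mem_nhdsWithin : Set.Ioi (0 : ℝ) ∈ 𝓝[>] 0)).exists
  refine ⟨r, hr0, fun x j k hj hk => by_contra fun hjk => ?_⟩
  linarith [hr j k hjk, dist_triangle_right (ω j) (ω k) x]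

theorem exists_norm_sub_lt_of_norm_prod_lt {ι 𝕜 : Type*} [Fintype ι] [NormedField 𝕜] {w : 𝕜}
    {x : ι → 𝕜} {r : ℝ} (hr : 0 ≤ r) (h : ‖∏ i, (w - x i)‖ < r ^ Fintype.card ι) :
    ∃ i, ‖w - x i‖ < r := by
  by_contra! hle
  refine h.not_ge ?_
  rw [norm_prod, ← Finset.card_univ, ← Finset.prod_const]
  exact Finset.prod_le_prod (fun _ _ => hr) fun i _ => hle i

theorem exists_perm_tendsto_of_tendsto_prod_sub {β ι 𝕜 : Type*} [Fintype ι] [NormedField 𝕜]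
    {l : Filter β} {ω : ι → 𝕜} (hω : Injective ω) {x : β → ι → 𝕜}
    (h : ∀ j, Tendsto (fun b => ∏ i, (ω j - x b i)) l (𝓝 0)) :
    ∃ σ : β → Equiv.Perm ι, ∀ j, Tendsto (fun b => x b (σ b j)) l (𝓝 (ω j)) := by
  obtain ⟨r₀, hr₀, hsep⟩ := hω.exists_pos_eq_of_dist_lt
  have hnear : ∀ r > 0, ∀ᶠ b in l, ∀ j, ∃ i, dist (ω j) (x b i) < r := fun r hr =>
    eventually_all.2 fun j =>
      ((tendsto_zero_iff_norm_tendsto_zero.1 (h j)).eventually (gt_mem_nhds (pow_pos hr _))).mono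
        fun b hb => by simpa only [dist_eq_norm] using exists_norm_sub_lt_of_norm_prod_lt hr.le hb
  have hperm : ∀ b, ∃ σ : Equiv.Perm ι,
      (∀ j, ∃ i, dist (ω j) (x b i) < r₀) → ∀ j, dist (ω j) (x b (σ j)) < r₀ := by
    intro b
    by_cases hb : ∀ j, ∃ i, dist (ω j) (x b i) < r₀
    · choose τ hτ using hb
      have hτ_inj : Injective τ := fun j k hjk => hsep _ j k (hτ j) (by rw [hjk]; exact hτ k)
      exact ⟨Equiv.ofBijective τ hτ_inj.bijective_of_finite, fun _ => hτ⟩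
    · exact ⟨1, fun h => absurd h hb⟩
  choose σ hσ using hperm
  refine ⟨σ, fun j => Metric.tendsto_nhds.2 fun r hr => ?_⟩
  filter_upwards [hnear r₀ hr₀, hnear (min r r₀) (lt_min hr hr₀)] with b hb₀ hb
  obtain ⟨i, hi⟩ := hb j
  have hij : (σ b).symm i = j :=
    hsep _ _ _ (by simpa using hσ b hb₀ ((σ b).symm i)) (hi.trans_le (min_le_right _ _))
  rw [dist_comm, ← Equiv.apply_symm_apply (σ b) i, hij] at hi
  exact hi.trans_le (min_le_left _ _)

theorem mul_prod_sub_mul_roots_eq_rescaled (A c q₀ q₁ q₂ q₃ : ℂ) {ε t : ℂ} (ht : t ≠ 0)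
    (htε : t ^ 4 = ε) {x : Fin 4 → ℂ}
    (hx : ∀ z, A * z ^ 4 + q₃ * z ^ 3 + q₂ * z ^ 2 + q₁ * z + q₀ + c * ε⁻¹ = A * ∏ i, (z - x i))
    (w : ℂ) :
    A * ∏ i, (w - t * x i)
      = A * w ^ 4 + c + t * (q₃ * w ^ 3 + t * q₂ * w ^ 2 + t ^ 2 * q₁ * w + t ^ 3 * q₀) := by
  have hscale : ∏ i, (w - t * x i) = t ^ 4 * ∏ i, (w / t - x i) := by
    simp only [Fin.prod_univ_four]; field_simp
  rw [hscale, mul_left_comm, ← hx, ← htε]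
  field_simp
  ring

theorem tendsto_prod_sub_rpow_mul_roots (A c q₀ q₁ q₂ q₃ : ℂ) (hA : A ≠ 0) {w : ℂ}
    (hw : w ^ 4 = -c / A) {x : ℝ → Fin 4 → ℂ}
    (hx : ∀ ε : ℝ, 0 < ε → ∀ z, A * z ^ 4 + q₃ * z ^ 3 + q₂ * z ^ 2 + q₁ * z + q₀ + c * (ε : ℂ)⁻¹
      = A * ∏ i, (z - x ε i)) :
    Tendsto (fun ε : ℝ => ∏ i, (w - ((ε ^ ((1 : ℝ) / 4) : ℝ) : ℂ) * x ε i)) (𝓝[>] 0) (𝓝 0) := by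
  have hδ : Tendsto (fun ε : ℝ => ((ε ^ ((1 : ℝ) / 4) : ℝ) : ℂ)) (𝓝[>] 0) (𝓝 0) := by
    have := (Real.continuous_rpow_const (by norm_num : (0 : ℝ) ≤ 1 / 4)).tendsto 0
    simpa [Function.comp_def] using
      (Complex.continuous_ofReal.tendsto _).comp (this.mono_left nhdsWithin_le_nhds)
  have hlim : Tendsto
      (fun t : ℂ => t * (q₃ * w ^ 3 + t * q₂ * w ^ 2 + t ^ 2 * q₁ * w + t ^ 3 * q₀) / A)
      (𝓝 0) (𝓝 0) := by
    simpa using (by fun_prop : Continuous fun t : ℂ =>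
      t * (q₃ * w ^ 3 + t * q₂ * w ^ 2 + t ^ 2 * q₁ * w + t ^ 3 * q₀) / A).tendsto 0
  refine (hlim.comp hδ).congr' (eventually_nhdsWithin_of_forall fun ε (hε : 0 < ε) => ?_)
  set t : ℂ := ((ε ^ ((1 : ℝ) / 4) : ℝ) : ℂ)
  have ht : t ≠ 0 := Complex.ofReal_ne_zero.2 (Real.rpow_pos_of_pos hε _).ne'
  have htε : t ^ 4 = ε := by
    rw [← Complex.ofReal_pow, ← Real.rpow_natCast, ← Real.rpow_mul hε.le]; norm_num
  have hwc : A * w ^ 4 + c = 0 := by rw [hw]; field_simp; ring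
  refine (mul_left_cancel₀ hA ?_).symm
  rw [mul_prod_sub_mul_roots_eq_rescaled A c q₀ q₁ q₂ q₃ ht htε (hx ε hε) w, hwc]
  simp only [Function.comp_apply, t]
  field_simp
  ring

/-- Geostrophic degeneracy for the quasigeostrophic equation on a disc: all four roots of the
quartic `P_ε(X) = A X⁴ + q₃ X³ + q₂ X² + q₁ X + q₀ + c ε⁻¹` (with `A ≠ 0`, `c ≠ 0`) blow up
at the rate `ε^{-1/4}`: they can be enumerated with multiplicity as `X₀, …, X₃` so that, for
the four fourth roots `ω₀, …, ω₃` of `-c/A`, one has `ε^{1/4} X_l(ε) → ω_l`. -/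
theorem stmt16 (A c q₀ q₁ q₂ q₃ : ℂ) (hA : A ≠ 0) (hc : c ≠ 0) :
    ∃ ε₀ > (0 : ℝ), ∃ X : Fin 4 → ℝ → ℂ,
      (∀ ε : ℝ, 0 < ε → ε < ε₀ → ∀ z : ℂ,
        A * z ^ 4 + q₃ * z ^ 3 + q₂ * z ^ 2 + q₁ * z + q₀ + c * (ε : ℂ)⁻¹
          = A * ∏ i : Fin 4, (z - X i ε)) ∧
      ∃ ω : Fin 4 → ℂ, Function.Injective ω ∧ (∀ l, ω l ^ 4 = -c / A) ∧
        ∀ l : Fin 4,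
          Tendsto (fun ε : ℝ => ((ε ^ ((1 : ℝ) / 4) : ℝ) : ℂ) * X l ε)
            (𝓝[>] (0 : ℝ)) (𝓝 (ω l)) := by
  obtain ⟨ω, hω, hω4⟩ :=
    Complex.exists_injective_pow_eq four_ne_zero (div_ne_zero (neg_ne_zero.2 hc) hA)
  choose x hx using fun ε : ℝ => exists_quartic_eq_mul_prod hA q₃ q₂ q₁ (q₀ + c * (ε : ℂ)⁻¹)
  simp only [← add_assoc] at hx
  obtain ⟨σ, hσ⟩ := exists_perm_tendsto_of_tendsto_prod_sub hω fun j =>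
    tendsto_prod_sub_rpow_mul_roots A c q₀ q₁ q₂ q₃ hA (hω4 j) fun ε _ => hx ε
  refine ⟨1, one_pos, fun l ε => x ε (σ ε l), fun ε _ _ z => ?_, ω, hω, hω4, hσ⟩
  rw [hx ε z, Equiv.prod_comp (σ ε) fun i => z - x ε i]
end
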